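/- arXiv:1708.07202 — 2 statements merged into one kernel-verified Lean document; each statement's English description precedes it below -/
import Mathlib

section
/- Let M ⊂ ℝ³ be an oriented hyperbolic surface (Gaussian curvature κ < 0) and ψ = (x₁,x₂) an asymptotic coordinate chart with positive orientation, so Π(∂x₁,∂x₁) = Π(∂x₂,∂x₂) = 0. Then for any C² function w, ⟨D²w, Q*Π⟩ = ∓ 2 (Π(∂x₁,∂x₂)/det G) · (w_{x₁x₂} − (D_{∂x₁}∂x₂)(w)), where det G = |∂x₁|²|∂x₂|² − ⟨∂x₁,∂x₂⟩², the sign is − if Π(∂x₁,∂x₂) > 0 and + otherwise; equivalently ⟨D²w,Q*Π⟩ = ±2√(−κ/det G)· w_{x₁x₂} + first order terms, since κ = −Π(∂x₁,∂x₂)²/det G. -/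
/-!
On a plane, `H x x * B y y - H x y * B y x - H y x * B x y + H y y * B x x` is the polarization
of the determinant of a bilinear form, so changing the pair `(x, y)` multiplies it by the square
of the determinant of the change of basis. Evaluated on the orthonormal pair `(e₁, e₂)` it is
`⟨H, Q*B⟩`, since `Q e₁ = -e₂` and `Q e₂ = e₁`; evaluated on the asymptotic pair `(v₁, v₂)` it is
`-2 B(v₁,v₂) H(v₁,v₂)`. Comparing the two with the inner product in place of `H` and `B` shows that
the squared determinant is `1 / det G`.
-/

open scoped RealInnerProductSpace

section MixedDiscr

variable {V : Type*} [AddCommGroup V] [Module ℝ V]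

def mixedDiscr (H B : V →ₗ[ℝ] V →ₗ[ℝ] ℝ) (x y : V) : ℝ :=
  H x x * B y y - H x y * B y x - H y x * B x y + H y y * B x x

theorem mixedDiscr_smul_add_smul (H B : V →ₗ[ℝ] V →ₗ[ℝ] ℝ) (x y : V) (a b c d : ℝ) :
    mixedDiscr H B (a • x + b • y) (c • x + d • y) = (a * d - b * c) ^ 2 * mixedDiscr H B x y := by
  simp only [mixedDiscr, map_add, map_smul, LinearMap.add_apply, LinearMap.smul_apply,
    smul_eq_mul]
  ring

theorem mixedDiscr_of_isotropic {H B : V →ₗ[ℝ] V →ₗ[ℝ] ℝ} {x y : V}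
    (hBsym : B y x = B x y) (hHsym : H y x = H x y) (hx : B x x = 0) (hy : B y y = 0) :
    mixedDiscr H B x y = -2 * B x y * H x y := by
  rw [mixedDiscr, hBsym, hHsym, hx, hy]
  ring

theorem mixedDiscr_eq_of_rotation (H B : V →ₗ[ℝ] V →ₗ[ℝ] ℝ) {Q : V →ₗ[ℝ] V} {e₁ e₂ : V}
    (hQ₁ : Q e₁ = -e₂) (hQ₂ : Q e₂ = e₁) :
    H e₁ e₁ * B (Q e₁) (Q e₁) + H e₁ e₂ * B (Q e₁) (Q e₂) +
        H e₂ e₁ * B (Q e₂) (Q e₁) + H e₂ e₂ * B (Q e₂) (Q e₂)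
      = mixedDiscr H B e₁ e₂ := by
  simp only [hQ₁, hQ₂, mixedDiscr, map_neg, LinearMap.neg_apply, neg_neg]
  ring

end MixedDiscr

section InnerProductSpace

variable {V : Type*} [NormedAddCommGroup V] [InnerProductSpace ℝ V]

theorem mixedDiscr_innerₗ (x y : V) :
    mixedDiscr (innerₗ V) (innerₗ V) x y = 2 * (⟪x, x⟫ * ⟪y, y⟫ - ⟪x, y⟫ ^ 2) := by
  simp only [mixedDiscr, innerₗ_apply_apply, real_inner_comm x y]
  ring

theorem mixedDiscr_mul_gram_of_orthonormal (H B : V →ₗ[ℝ] V →ₗ[ℝ] ℝ) {e₁ e₂ v₁ v₂ : V}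
    (he₁ : ⟪e₁, e₁⟫ = 1) (he₂ : ⟪e₂, e₂⟫ = 1) (he₁₂ : ⟪e₁, e₂⟫ = 0)
    {a₁ b₁ a₂ b₂ : ℝ} (hv₁ : e₁ = a₁ • v₁ + b₁ • v₂) (hv₂ : e₂ = a₂ • v₁ + b₂ • v₂) :
    mixedDiscr H B e₁ e₂ * (⟪v₁, v₁⟫ * ⟪v₂, v₂⟫ - ⟪v₁, v₂⟫ ^ 2) = mixedDiscr H B v₁ v₂ := by
  have hgram : 2 = (a₁ * b₂ - b₁ * a₂) ^ 2 * (2 * (⟪v₁, v₁⟫ * ⟪v₂, v₂⟫ - ⟪v₁, v₂⟫ ^ 2)) := by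
    have h := mixedDiscr_innerₗ e₁ e₂
    rw [he₁, he₂, he₁₂, hv₁, hv₂, mixedDiscr_smul_add_smul, mixedDiscr_innerₗ] at h
    linarith
  rw [hv₁, hv₂, mixedDiscr_smul_add_smul]
  linear_combination -mixedDiscr H B v₁ v₂ * hgram / 2

end InnerProductSpace

theorem sqrt_neg_neg_sq_div_div {b d : ℝ} (hd : 0 < d) :
    Real.sqrt (-(-b ^ 2 / d) / d) = |b| / d := by
  rw [show -(-b ^ 2 / d) / d = (|b| / d) ^ 2 by rw [div_pow, sq_abs]; field_simp]
  exact Real.sqrt_sq (by positivity)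

/-- Normal form of the operator `⟨D²w, Q*Π⟩` in asymptotic coordinates: if
`v₁, v₂` (the coordinate vector fields `∂x₁, ∂x₂`) are null directions of the
second fundamental form `B` (i.e. `B(v₁,v₁) = B(v₂,v₂) = 0`), `(e₁,e₂)` is a
positively oriented orthonormal basis, `Q` the rotation by `π/2`, and `H` is a
symmetric bilinear form (the covariant Hessian `D²w`, so that `H(v₁,v₂)`
represents `w_{x₁x₂} - (D_{∂x₁}∂x₂)(w)`), then
`⟨H, Q*B⟩ = -2 (B(v₁,v₂)/det G) H(v₁,v₂)`, and with
`κ = -B(v₁,v₂)²/det G` this equals `∓2√(-κ/det G) H(v₁,v₂)` according to the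
sign of `B(v₁,v₂)`. -/
theorem stmt12 {V : Type*} [NormedAddCommGroup V] [InnerProductSpace ℝ V]
    (e₁ e₂ : V)
    (he₁ : ⟪e₁, e₁⟫ = 1) (he₂ : ⟪e₂, e₂⟫ = 1) (he₁₂ : ⟪e₁, e₂⟫ = 0)
    (Q : V →ₗ[ℝ] V) (hQ : ∀ α : V, Q α = ⟪α, e₂⟫ • e₁ - ⟪α, e₁⟫ • e₂)
    (B H : V →ₗ[ℝ] V →ₗ[ℝ] ℝ)
    (hBsym : ∀ x y : V, B x y = B y x) (hHsym : ∀ x y : V, H x y = H y x)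
    (v₁ v₂ : V) (hnull₁ : B v₁ v₁ = 0) (hnull₂ : B v₂ v₂ = 0)
    (hspan : ∀ v : V, ∃ a b : ℝ, v = a • v₁ + b • v₂)
    (detG : ℝ) (hdetG : detG = ⟪v₁, v₁⟫ * ⟪v₂, v₂⟫ - ⟪v₁, v₂⟫ ^ 2)
    (hdetGpos : 0 < detG) (κ : ℝ) (hκ : κ = -(B v₁ v₂) ^ 2 / detG) :
    (H e₁ e₁ * B (Q e₁) (Q e₁) + H e₁ e₂ * B (Q e₁) (Q e₂) +
        H e₂ e₁ * B (Q e₂) (Q e₁) + H e₂ e₂ * B (Q e₂) (Q e₂)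
      = -2 * (B v₁ v₂ / detG) * H v₁ v₂) ∧
    (0 < B v₁ v₂ →
      H e₁ e₁ * B (Q e₁) (Q e₁) + H e₁ e₂ * B (Q e₁) (Q e₂) +
          H e₂ e₁ * B (Q e₂) (Q e₁) + H e₂ e₂ * B (Q e₂) (Q e₂)
        = -2 * Real.sqrt (-κ / detG) * H v₁ v₂) ∧
    (B v₁ v₂ < 0 →
      H e₁ e₁ * B (Q e₁) (Q e₁) + H e₁ e₂ * B (Q e₁) (Q e₂) +
          H e₂ e₁ * B (Q e₂) (Q e₁) + H e₂ e₂ * B (Q e₂) (Q e₂)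
        = 2 * Real.sqrt (-κ / detG) * H v₁ v₂) := by
  obtain ⟨a₁, b₁, hv₁⟩ := hspan e₁
  obtain ⟨a₂, b₂, hv₂⟩ := hspan e₂
  have hQ₁ : Q e₁ = -e₂ := by rw [hQ, he₁₂, he₁]; simp
  have hQ₂ : Q e₂ = e₁ := by rw [hQ, he₂, real_inner_comm, he₁₂]; simp
  have hasymp : mixedDiscr H B e₁ e₂ = -2 * (B v₁ v₂ / detG) * H v₁ v₂ := by
    have h := mixedDiscr_mul_gram_of_orthonormal H B he₁ he₂ he₁₂ hv₁ hv₂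
    rw [← hdetG, mixedDiscr_of_isotropic (hBsym _ _) (hHsym _ _) hnull₁ hnull₂] at h
    field_simp
    linear_combination h
  rw [mixedDiscr_eq_of_rotation H B hQ₁ hQ₂, hasymp, hκ, sqrt_neg_neg_sq_div_div hdetGpos]
  refine ⟨rfl, fun hpos => by rw [abs_of_pos hpos], fun hneg => by rw [abs_of_neg hneg]; ring⟩
end

section
/- Let S be a self-adjoint operator on an oriented 2-dimensional inner product space with det S = κ < 0, let Q be the π/2-rotation, and let X = X₁v₁ + X₂v₂ be written in a basis v₁,v₂ of null directions of Π(·,·) = ⟨S·,·⟩ normalized so that Π(v₁,v₂) ≠ 0. If Π(X,X) ≠ 0, then QSX is proportional to X₁v₁ − X₂v₂, with proportionality factor σ satisfying σ² = −κ; consequently ρ(X)·QSX = ± (X₁v₁ − X₂v₂), where ρ(X) = sign(Π(X,X))/√(−κ), the sign depending only on the orientation datum sign det(v₁, v₂) and on sign(X₁X₂). -/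
open scoped RealInnerProductSpace

/-!
Since `Q` is skew and `S` symmetric, `Π(QSv, v) = ⟪QSv, Sv⟫ = 0` for every `v`. Applied to the
null directions this forces `QSv₁ ∥ v₁` and `QSv₂ ∥ v₂`, and skewness once more gives
`QSv₁ = σ v₁`, `QSv₂ = -σ v₂`. As `det Q = 1`, comparing determinants gives
`-σ² = det (QS) = det S = κ`. Finally `Π(X, X) = 2 X₁ X₂ Π(v₁, v₂)` and `√(-κ) = |σ|`,
so `ρ(X) · σ = sign (X₁ X₂) · sign Π(v₁, v₂) · sign σ`.
-/

namespace Real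

theorem sign_mul_of_pos {a : ℝ} (ha : 0 < a) (c : ℝ) : sign (a * c) = sign c := by
  rcases lt_trichotomy c 0 with hc | rfl | hc
  · rw [sign_of_neg hc, sign_of_neg (mul_neg_of_pos_of_neg ha hc)]
  · rw [mul_zero]
  · rw [sign_of_pos hc, sign_of_pos (mul_pos ha hc)]

theorem sign_mul_of_neg {a : ℝ} (ha : a < 0) (c : ℝ) : sign (a * c) = -sign c := by
  have h := sign_mul_of_pos (neg_pos.mpr ha) c
  rw [neg_mul, sign_neg] at h
  linarith

theorem div_abs_mul_self {σ : ℝ} (hσ : σ ≠ 0) (a : ℝ) : a / |σ| * σ = a * sign σ := by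
  rcases hσ.lt_or_gt with hσ | hσ
  · rw [abs_of_neg hσ, sign_of_neg hσ]
    field_simp
  · rw [abs_of_pos hσ, sign_of_pos hσ]
    field_simp

theorem sign_mul_sign_eq_one_or {a b : ℝ} (ha : a ≠ 0) (hb : b ≠ 0) :
    sign a * sign b = 1 ∨ sign a * sign b = -1 := by
  rcases sign_apply_eq_of_ne_zero a ha with h | h <;>
    rcases sign_apply_eq_of_ne_zero b hb with h' | h' <;> norm_num [h, h']

end Real

theorem LinearMap.det_eq_of_basis_fin_two {R M : Type*} [CommRing R] [AddCommGroup M]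
    [Module R M] (B : Module.Basis (Fin 2) R M) (f : M →ₗ[R] M) {a b c d : R}
    (h₀ : f (B 0) = a • B 0 + c • B 1) (h₁ : f (B 1) = b • B 0 + d • B 1) :
    LinearMap.det f = a * d - b * c := by
  rw [← LinearMap.det_toMatrix B, Matrix.det_fin_two]
  simp [LinearMap.toMatrix_apply, h₀, h₁]

theorem LinearMap.sq_eq_neg_det_of_comp_eq {R M : Type*} [CommRing R] [AddCommGroup M]
    [Module R M] (B : Module.Basis (Fin 2) R M) {Q S : M →ₗ[R] M} (hQ : LinearMap.det Q = 1)
    {σ : R} (h₀ : Q (S (B 0)) = σ • B 0) (h₁ : Q (S (B 1)) = -σ • B 1) :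
    σ ^ 2 = -LinearMap.det S := by
  have hdet := LinearMap.det_comp Q S
  rw [hQ, one_mul, LinearMap.det_eq_of_basis_fin_two B (Q ∘ₗ S) (a := σ) (b := 0) (c := 0)
    (d := -σ) (by simpa using h₀) (by simpa using h₁)] at hdet
  rw [← hdet]
  ring

theorem Submodule.top_le_span_range_fin_two {R M : Type*} [Semiring R] [AddCommMonoid M]
    [Module R M] {v₁ v₂ : M} (hspan : ∀ v : M, ∃ a b : R, v = a • v₁ + b • v₂) :
    ⊤ ≤ Submodule.span R (Set.range ![v₁, v₂]) := by
  rintro v -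
  obtain ⟨a, b, rfl⟩ := hspan v
  rw [Matrix.range_cons_cons_empty, Submodule.mem_span_pair]
  exact ⟨a, b, rfl⟩

section Rotation

variable {V : Type*} [NormedAddCommGroup V] [InnerProductSpace ℝ V] {e₁ e₂ : V} {Q : V →ₗ[ℝ] V}

theorem inner_rotation_left (hQ : ∀ α : V, Q α = ⟪α, e₂⟫ • e₁ - ⟪α, e₁⟫ • e₂) (w z : V) :
    ⟪Q w, z⟫ = -⟪w, Q z⟫ := by
  simp only [hQ, inner_sub_left, inner_sub_right, real_inner_smul_left, real_inner_smul_right,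
    real_inner_comm e₁, real_inner_comm e₂]
  ring

theorem det_rotation_eq_one (hV : Module.finrank ℝ V = 2)
    (he₁ : ⟪e₁, e₁⟫ = 1) (he₂ : ⟪e₂, e₂⟫ = 1) (he₁₂ : ⟪e₁, e₂⟫ = 0)
    (hQ : ∀ α : V, Q α = ⟪α, e₂⟫ • e₁ - ⟪α, e₁⟫ • e₂) :
    LinearMap.det Q = 1 := by
  have hn₁ : ‖e₁‖ = 1 := (pow_eq_one_iff_of_nonneg (norm_nonneg _) two_ne_zero).mp
    (by rwa [← real_inner_self_eq_norm_sq])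
  have hn₂ : ‖e₂‖ = 1 := (pow_eq_one_iff_of_nonneg (norm_nonneg _) two_ne_zero).mp
    (by rwa [← real_inner_self_eq_norm_sq])
  have he : Orthonormal ℝ ![e₁, e₂] := by
    rw [orthonormal_iff_ite]
    intro i j
    fin_cases i <;> fin_cases j <;> simp [hn₁, hn₂, he₁₂, real_inner_comm e₁ e₂]
  let E := basisOfOrthonormalOfCardEqFinrank he (by rw [Fintype.card_fin, hV])
  have hE : ⇑E = ![e₁, e₂] := coe_basisOfOrthonormalOfCardEqFinrank he _
  rw [LinearMap.det_eq_of_basis_fin_two E Q (a := 0) (b := 1) (c := -1) (d := 0)]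
  · ring
  all_goals simp [hE, hQ, hn₁, hn₂, he₁₂, real_inner_comm e₁ e₂]

end Rotation

section NullDirections

variable {V : Type*} [NormedAddCommGroup V] [InnerProductSpace ℝ V] {S : V →ₗ[ℝ] V}

theorem LinearMap.IsSymmetric.real_inner_map_comm (hS : S.IsSymmetric) (x y : V) :
    ⟪S x, y⟫ = ⟪S y, x⟫ := by
  rw [hS, real_inner_comm]

variable {v₁ v₂ : V}

theorem inner_map_self_of_null (hS : S.IsSymmetric) (hnull₁ : ⟪S v₁, v₁⟫ = 0)
    (hnull₂ : ⟪S v₂, v₂⟫ = 0) (X₁ X₂ : ℝ) :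
    ⟪S (X₁ • v₁ + X₂ • v₂), X₁ • v₁ + X₂ • v₂⟫ = 2 * (X₁ * X₂) * ⟪S v₁, v₂⟫ := by
  simp only [map_add, map_smul, inner_add_left, inner_add_right, real_inner_smul_left,
    real_inner_smul_right, hnull₁, hnull₂, hS.real_inner_map_comm v₂ v₁]
  ring

theorem linearIndependent_of_null (hnull₂ : ⟪S v₂, v₂⟫ = 0) (hnd : ⟪S v₁, v₂⟫ ≠ 0) :
    LinearIndependent ℝ ![v₁, v₂] := by
  rw [linearIndependent_fin2]
  refine ⟨fun h => hnd (by simp_all), fun a h => hnd ?_⟩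
  simp only [Matrix.cons_val_one, Matrix.cons_val_zero] at h
  rw [← h, map_smul, real_inner_smul_left, hnull₂, mul_zero]

theorem exists_eq_smul_of_inner_map_eq_zero (hS : S.IsSymmetric) (hnull₁ : ⟪S v₁, v₁⟫ = 0)
    (hnd : ⟪S v₁, v₂⟫ ≠ 0) (hspan : ∀ v : V, ∃ a b : ℝ, v = a • v₁ + b • v₂) {w : V}
    (hw : ⟪S w, v₁⟫ = 0) : ∃ a : ℝ, w = a • v₁ := by
  obtain ⟨a, b, rfl⟩ := hspan w
  simp only [map_add, map_smul, inner_add_left, real_inner_smul_left, hnull₁,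
    hS.real_inner_map_comm v₂ v₁, mul_zero, zero_add] at hw
  obtain rfl := (mul_eq_zero.mp hw).resolve_right hnd
  exact ⟨a, by rw [zero_smul, add_zero]⟩

theorem exists_comp_eq_smul_of_null (hS : S.IsSymmetric) {T : V →ₗ[ℝ] V}
    (hT : ∀ w z : V, ⟪T w, z⟫ = -⟪w, T z⟫) (hnull₁ : ⟪S v₁, v₁⟫ = 0)
    (hnull₂ : ⟪S v₂, v₂⟫ = 0) (hnd : ⟪S v₁, v₂⟫ ≠ 0)
    (hspan : ∀ v : V, ∃ a b : ℝ, v = a • v₁ + b • v₂) :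
    ∃ σ : ℝ, T (S v₁) = σ • v₁ ∧ T (S v₂) = -σ • v₂ := by
  have hTS : ∀ v : V, ⟪S (T (S v)), v⟫ = 0 := fun v => by
    rw [hS]
    linarith [hT (S v) (S v), real_inner_comm (S v) (T (S v))]
  obtain ⟨σ, h₁⟩ := exists_eq_smul_of_inner_map_eq_zero hS hnull₁ hnd hspan (hTS v₁)
  obtain ⟨δ, h₂⟩ := exists_eq_smul_of_inner_map_eq_zero hS hnull₂
    (by rwa [hS.real_inner_map_comm]) (fun v => by
      obtain ⟨a, b, h⟩ := hspan v
      exact ⟨b, a, h.trans (add_comm _ _)⟩) (hTS v₂)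
  have hσδ : σ * ⟪S v₁, v₂⟫ = -(δ * ⟪S v₁, v₂⟫) := by
    have h := hS (T (S v₁)) v₂
    rwa [hT, h₁, h₂, map_smul, real_inner_smul_left, real_inner_smul_right] at h
  have hδ : δ = -σ := mul_right_cancel₀ hnd (by linear_combination hσδ)
  exact ⟨σ, h₁, by rw [h₂, hδ]⟩

end NullDirections

theorem stmt18_general {V : Type*} [NormedAddCommGroup V] [InnerProductSpace ℝ V]
    (e₁ e₂ : V)
    (he₁ : ⟪e₁, e₁⟫ = 1) (he₂ : ⟪e₂, e₂⟫ = 1) (he₁₂ : ⟪e₁, e₂⟫ = 0)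
    (Q : V →ₗ[ℝ] V) (hQ : ∀ α : V, Q α = ⟪α, e₂⟫ • e₁ - ⟪α, e₁⟫ • e₂)
    (S : V →ₗ[ℝ] V) (hS : ∀ x y : V, ⟪S x, y⟫ = ⟪x, S y⟫)
    (κ : ℝ) (hκ : κ = LinearMap.det S) (hκneg : κ < 0)
    (v₁ v₂ : V) (hnull₁ : ⟪S v₁, v₁⟫ = 0) (hnull₂ : ⟪S v₂, v₂⟫ = 0)
    (hnd : ⟪S v₁, v₂⟫ ≠ 0)
    (hspan : ∀ v : V, ∃ a b : ℝ, v = a • v₁ + b • v₂) :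
    (∃ σ : ℝ, σ ^ 2 = -κ ∧
      ∀ X₁ X₂ : ℝ, Q (S (X₁ • v₁ + X₂ • v₂)) = σ • (X₁ • v₁ - X₂ • v₂)) ∧
    ∃ s : ℝ, (s = 1 ∨ s = -1) ∧
      (∀ X₁ X₂ : ℝ, 0 < X₁ * X₂ →
        (Real.sign ⟪S (X₁ • v₁ + X₂ • v₂), X₁ • v₁ + X₂ • v₂⟫ /
            Real.sqrt (-κ)) • Q (S (X₁ • v₁ + X₂ • v₂)) =
          s • (X₁ • v₁ - X₂ • v₂)) ∧
      (∀ X₁ X₂ : ℝ, X₁ * X₂ < 0 →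
        (Real.sign ⟪S (X₁ • v₁ + X₂ • v₂), X₁ • v₁ + X₂ • v₂⟫ /
            Real.sqrt (-κ)) • Q (S (X₁ • v₁ + X₂ • v₂)) =
          (-s) • (X₁ • v₁ - X₂ • v₂)) := by
  obtain ⟨σ, hσ₁, hσ₂⟩ :=
    exists_comp_eq_smul_of_null hS (inner_rotation_left hQ) hnull₁ hnull₂ hnd hspan
  have hQS : ∀ X₁ X₂ : ℝ, Q (S (X₁ • v₁ + X₂ • v₂)) = σ • (X₁ • v₁ - X₂ • v₂) := by
    intro X₁ X₂
    simp only [map_add, map_smul, hσ₁, hσ₂]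
    module
  let B := Module.Basis.mk (linearIndependent_of_null hnull₂ hnd)
    (Submodule.top_le_span_range_fin_two hspan)
  have hV : Module.finrank ℝ V = 2 := by rw [Module.finrank_eq_card_basis B, Fintype.card_fin]
  have hσκ : σ ^ 2 = -κ := hκ ▸ LinearMap.sq_eq_neg_det_of_comp_eq B
    (det_rotation_eq_one hV he₁ he₂ he₁₂ hQ) (by simpa [B] using hσ₁) (by simpa [B] using hσ₂)
  have hσ : σ ≠ 0 := by
    rintro rfl
    linarith
  have hsqrt : √(-κ) = |σ| := by rw [← hσκ, Real.sqrt_sq_eq_abs]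
  refine ⟨⟨σ, hσκ, hQS⟩, Real.sign ⟪S v₁, v₂⟫ * Real.sign σ,
    Real.sign_mul_sign_eq_one_or hnd hσ, fun X₁ X₂ hX => ?_, fun X₁ X₂ hX => ?_⟩
  · rw [inner_map_self_of_null hS hnull₁ hnull₂, hQS, hsqrt, smul_smul,
      Real.sign_mul_of_pos (by positivity), Real.div_abs_mul_self hσ]
  · rw [inner_map_self_of_null hS hnull₁ hnull₂, hQS, hsqrt, smul_smul,
      Real.sign_mul_of_neg (by linarith), Real.div_abs_mul_self hσ, neg_mul]

/-- In asymptotic (null) directions `v₁, v₂` of `Π(·,·) = ⟪S·,·⟫` on a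
2-dimensional oriented inner product space with `κ = det S < 0`, for
`X = X₁v₁ + X₂v₂` with `Π(X,X) ≠ 0` (equivalently `X₁X₂ ≠ 0`) the rotated vector
`QSX` is proportional to `X₁v₁ - X₂v₂`, with factor `σ` satisfying `σ² = -κ`;
consequently `ρ(X)·QSX = ±(X₁v₁ - X₂v₂)`, where
`ρ(X) = sign(Π(X,X))/√(-κ)`, the sign depending only on the orientation and on
`sign(X₁X₂)`. -/
theorem stmt18 {V : Type*} [NormedAddCommGroup V] [InnerProductSpace ℝ V]
    [FiniteDimensional ℝ V]
    (e₁ e₂ : V)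
    (he₁ : ⟪e₁, e₁⟫ = 1) (he₂ : ⟪e₂, e₂⟫ = 1) (he₁₂ : ⟪e₁, e₂⟫ = 0)
    (Q : V →ₗ[ℝ] V) (hQ : ∀ α : V, Q α = ⟪α, e₂⟫ • e₁ - ⟪α, e₁⟫ • e₂)
    (S : V →ₗ[ℝ] V) (hS : ∀ x y : V, ⟪S x, y⟫ = ⟪x, S y⟫)
    (κ : ℝ) (hκ : κ = LinearMap.det S) (hκneg : κ < 0)
    (v₁ v₂ : V) (hnull₁ : ⟪S v₁, v₁⟫ = 0) (hnull₂ : ⟪S v₂, v₂⟫ = 0)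
    (hnd : ⟪S v₁, v₂⟫ ≠ 0)
    (hspan : ∀ v : V, ∃ a b : ℝ, v = a • v₁ + b • v₂) :
    (∃ σ : ℝ, σ ^ 2 = -κ ∧
      ∀ X₁ X₂ : ℝ, Q (S (X₁ • v₁ + X₂ • v₂)) = σ • (X₁ • v₁ - X₂ • v₂)) ∧
    ∃ s : ℝ, (s = 1 ∨ s = -1) ∧
      (∀ X₁ X₂ : ℝ, 0 < X₁ * X₂ →
        (Real.sign ⟪S (X₁ • v₁ + X₂ • v₂), X₁ • v₁ + X₂ • v₂⟫ /
            Real.sqrt (-κ)) • Q (S (X₁ • v₁ + X₂ • v₂)) =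
          s • (X₁ • v₁ - X₂ • v₂)) ∧
      (∀ X₁ X₂ : ℝ, X₁ * X₂ < 0 →
        (Real.sign ⟪S (X₁ • v₁ + X₂ • v₂), X₁ • v₁ + X₂ • v₂⟫ /
            Real.sqrt (-κ)) • Q (S (X₁ • v₁ + X₂ • v₂)) =
          (-s) • (X₁ • v₁ - X₂ • v₂)) :=
  stmt18_general e₁ e₂ he₁ he₂ he₁₂ Q hQ S hS κ hκ hκneg v₁ v₂ hnull₁ hnull₂ hnd hspan
end
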